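/- arXiv:math/0209045 — 3 statements merged into one kernel-verified Lean document; each statement's English description precedes it below -/
import Mathlib

section
/- If a, b, c are distinct vertices of a finite simple graph G with ab and ac edges of G, then G^{(ab)(ac)(ab)} equals the graph G with the labels of vertices b and c swapped. -/
/-- The pair `x, y` lies in different classes among (neighbors of `a` only,
neighbors of `b` only, neighbors of both), with both distinct from `a` and `b`. -/
def togglePair {V : Type} (G : SimpleGraph V) (a b x y : V) : Prop :=
  (x ≠ a ∧ x ≠ b ∧ y ≠ a ∧ y ≠ b) ∧
  (G.Adj a x ∨ G.Adj b x) ∧ (G.Adj a y ∨ G.Adj b y) ∧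
  ¬((G.Adj a x ↔ G.Adj a y) ∧ (G.Adj b x ↔ G.Adj b y))

lemma togglePair_comm {V : Type} (G : SimpleGraph V) (a b x y : V) :
    togglePair G a b x y ↔ togglePair G a b y x := by
  unfold togglePair; tauto

/-- The pivot `G^{ab}`: toggle the adjacency of every pair of vertices (distinct
from `a`, `b`) lying in different classes among (neighbors of `a` only,
neighbors of `b` only, neighbors of both); all other adjacencies unchanged. -/
def pivot {V : Type} (G : SimpleGraph V) (a b : V) : SimpleGraph V where
  Adj x y := (togglePair G a b x y ∧ x ≠ y ∧ ¬ G.Adj x y) ∨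
    (¬ togglePair G a b x y ∧ G.Adj x y)
  symm := by
    constructor
    intro x y h
    rcases h with ⟨ht, hxy, hna⟩ | ⟨ht, ha⟩
    · exact Or.inl ⟨(togglePair_comm G a b x y).mp ht, hxy.symm,
        fun h => hna h.symm⟩
    · exact Or.inr ⟨fun h => ht ((togglePair_comm G a b y x).mp h), ha.symm⟩
  loopless := by
    constructor
    intro x h
    rcases h with ⟨_, hxy, _⟩ | ⟨_, ha⟩
    · exact hxy rfl
    · exact (G.ne_of_adj ha) rfl

lemma pivot_adj {V : Type} {G : SimpleGraph V} {a b x y : V} :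
    (pivot G a b).Adj x y ↔ x ≠ y ∧ ¬(togglePair G a b x y ↔ G.Adj x y) := by
  show (togglePair G a b x y ∧ x ≠ y ∧ ¬ G.Adj x y) ∨
    (¬ togglePair G a b x y ∧ G.Adj x y) ↔ _
  by_cases h : x = y
  · subst h; simp [(G.irrefl : ¬ G.Adj x x), fun h : togglePair G a b x x => h.2.2.2 ⟨Iff.rfl, Iff.rfl⟩]
  · tauto

lemma pivot_adj_a1 {V : Type} {G : SimpleGraph V} {a b z : V} :
    (pivot G a b).Adj a z ↔ G.Adj a z := by
  rw [pivot_adj]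
  have h : ¬ togglePair G a b a z := fun h => h.1.1 rfl
  by_cases hz : a = z
  · subst hz; simp [(G.irrefl : ¬ G.Adj a a)]
  · tauto

lemma pivot_adj_b1 {V : Type} {G : SimpleGraph V} {a b z : V} :
    (pivot G a b).Adj b z ↔ G.Adj b z := by
  rw [pivot_adj]
  have h : ¬ togglePair G a b b z := fun h => h.1.2.1 rfl
  by_cases hz : b = z
  · subst hz; simp [(G.irrefl : ¬ G.Adj b b)]
  · tauto

lemma pivot_adj_a2 {V : Type} {G : SimpleGraph V} {a b z : V} :
    (pivot G a b).Adj z a ↔ G.Adj z a := by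
  rw [SimpleGraph.adj_comm, pivot_adj_a1, SimpleGraph.adj_comm]

lemma pivot_adj_b2 {V : Type} {G : SimpleGraph V} {a b z : V} :
    (pivot G a b).Adj z b ↔ G.Adj z b := by
  rw [SimpleGraph.adj_comm, pivot_adj_b1, SimpleGraph.adj_comm]

lemma adjHc {V : Type} (G : SimpleGraph V) (a b c z : V)
    (hab : G.Adj a b) (hac : G.Adj a c) (hbc : b ≠ c)
    (hza : z ≠ a) (hzb : z ≠ b) (hzc : z ≠ c) :
    (pivot G a b).Adj c z ↔
      ¬(((G.Adj a z ∨ G.Adj b z) ∧ ¬(G.Adj a z ∧ (G.Adj b c ↔ G.Adj b z))) ↔ G.Adj c z) := by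
  have hca : c ≠ a := hac.ne'
  have hcb : c ≠ b := hbc.symm
  have hcz : c ≠ z := fun h => hzc h.symm
  rw [pivot_adj]
  unfold togglePair
  tauto

lemma adjH2b {V : Type} (G : SimpleGraph V) (a b c z : V)
    (hab : G.Adj a b) (hac : G.Adj a c) (hbc : b ≠ c)
    (hza : z ≠ a) (hzb : z ≠ b) (hzc : z ≠ c) :
    (pivot (pivot G a b) a c).Adj b z ↔ G.Adj c z := by
  have hba : b ≠ a := hab.ne'
  have hca : c ≠ a := hac.ne'
  have hcb : c ≠ b := hbc.symm
  have hbz : b ≠ z := fun h => hzb h.symm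
  rw [pivot_adj]
  simp only [togglePair]
  simp only [pivot_adj_a1, pivot_adj_b1, pivot_adj_a2, pivot_adj_b2]
  rw [adjHc G a b c z hab hac hbc hza hzb hzc]
  rw [G.adj_comm c b]
  simp only [ne_eq, hba, hbc, hza, hzc, hbz, not_false_eq_true, true_and, and_true,
    hab, hac, true_iff, iff_true, true_or]
  clear hab hac hbc hba hca hcb hza hzb hzc hbz
  tauto

lemma adjH3c {V : Type} (G : SimpleGraph V) (a b c z : V)
    (hab : G.Adj a b) (hac : G.Adj a c) (hbc : b ≠ c)
    (hza : z ≠ a) (hzb : z ≠ b) (hzc : z ≠ c) :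
    (pivot (pivot (pivot G a b) a c) a b).Adj c z ↔ G.Adj b z := by
  have hba : b ≠ a := hab.ne'
  have hca : c ≠ a := hac.ne'
  have hcb : c ≠ b := hbc.symm
  have hcz : c ≠ z := fun h => hzc h.symm
  rw [pivot_adj]
  simp only [togglePair]
  simp only [pivot_adj_a1, pivot_adj_b1, pivot_adj_a2, pivot_adj_b2]
  rw [adjH2b G a b c z hab hac hbc hza hzb hzc,
    adjHc G a b c z hab hac hbc hza hzb hzc]
  simp only [ne_eq, hca, hcb, hza, hzb, hcz, not_false_eq_true, true_and, and_true,
    hab, hac, true_iff, iff_true, true_or]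
  clear hab hac hbc hba hca hcb hza hzb hzc hcz
  tauto

lemma adjH3xy {V : Type} (G : SimpleGraph V) (a b c x y : V)
    (hab : G.Adj a b) (hac : G.Adj a c) (hbc : b ≠ c)
    (hxa : x ≠ a) (hxb : x ≠ b) (hxc : x ≠ c)
    (hya : y ≠ a) (hyb : y ≠ b) (hyc : y ≠ c) (hxy : x ≠ y) :
    (pivot (pivot (pivot G a b) a c) a b).Adj x y ↔ G.Adj x y := by
  have hba : b ≠ a := hab.ne'
  have hca : c ≠ a := hac.ne'
  have hcb : c ≠ b := hbc.symm
  rw [pivot_adj]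
  simp only [togglePair]
  simp only [pivot_adj_a1, pivot_adj_b1, pivot_adj_a2, pivot_adj_b2]
  rw [adjH2b G a b c x hab hac hbc hxa hxb hxc,
    adjH2b G a b c y hab hac hbc hya hyb hyc]
  rw [pivot_adj]
  simp only [togglePair]
  simp only [pivot_adj_a1, pivot_adj_b1, pivot_adj_a2, pivot_adj_b2]
  rw [adjHc G a b c x hab hac hbc hxa hxb hxc,
    adjHc G a b c y hab hac hbc hya hyb hyc]
  rw [pivot_adj]
  simp only [togglePair]
  simp only [ne_eq, hxa, hxb, hxc, hya, hyb, hyc, hxy, hba, hca, hcb, hbc,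
    not_false_eq_true, true_and, and_true, hab, hac, true_iff, iff_true, true_or]
  clear hab hac hbc hba hca hcb hxa hxb hxc hya hyb hyc hxy
  by_cases h1 : G.Adj a x <;> by_cases h2 : G.Adj b x <;> by_cases h3 : G.Adj c x <;>
    by_cases h4 : G.Adj a y <;> by_cases h5 : G.Adj b y <;> by_cases h6 : G.Adj c y <;>
    by_cases h7 : G.Adj b c <;>
    simp [h1, h2, h3, h4, h5, h6, h7]

lemma adjH3b {V : Type} (G : SimpleGraph V) (a b c z : V)
    (hab : G.Adj a b) (hac : G.Adj a c) (hbc : b ≠ c)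
    (hza : z ≠ a) (hzb : z ≠ b) (hzc : z ≠ c) :
    (pivot (pivot (pivot G a b) a c) a b).Adj b z ↔ G.Adj c z := by
  rw [pivot_adj_b1]
  exact adjH2b G a b c z hab hac hbc hza hzb hzc

theorem pivot_three_eq_swap {V : Type} [DecidableEq V] (G : SimpleGraph V) (a b c : V)
    (hab : G.Adj a b) (hac : G.Adj a c) (hbc : b ≠ c) :
    pivot (pivot (pivot G a b) a c) a b = G.comap (Equiv.swap b c) := by
  have hba : b ≠ a := hab.ne'
  have hca : c ≠ a := hac.ne'
  have hcb : c ≠ b := hbc.symm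
  have hA3 : ∀ z, (pivot (pivot (pivot G a b) a c) a b).Adj a z ↔ G.Adj a z := by
    intro z; simp only [pivot_adj_a1]
  have hBC3 : (pivot (pivot (pivot G a b) a c) a b).Adj b c ↔ G.Adj b c := by
    simp only [pivot_adj_b1, pivot_adj_b2]
  ext x y
  simp only [SimpleGraph.comap_adj]
  by_cases hxy : x = y
  · rw [hxy]
    simp [SimpleGraph.irrefl]
  by_cases hxa : x = a
  · rw [hxa]
    rw [hA3 y, Equiv.swap_apply_of_ne_of_ne hab.ne hac.ne]
    by_cases hyb : y = b
    · rw [hyb, Equiv.swap_apply_left]; exact iff_of_true hab hac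
    by_cases hyc : y = c
    · rw [hyc, Equiv.swap_apply_right]; exact iff_of_true hac hab
    · rw [Equiv.swap_apply_of_ne_of_ne hyb hyc]
  by_cases hya : y = a
  · rw [hya]
    rw [SimpleGraph.adj_comm, hA3 x, Equiv.swap_apply_of_ne_of_ne hab.ne hac.ne,
      G.adj_comm _ a]
    by_cases hxb : x = b
    · rw [hxb, Equiv.swap_apply_left]; exact iff_of_true hab hac
    by_cases hxc : x = c
    · rw [hxc, Equiv.swap_apply_right]; exact iff_of_true hac hab
    · rw [Equiv.swap_apply_of_ne_of_ne hxb hxc]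
  by_cases hxb : x = b
  · rw [hxb, Equiv.swap_apply_left]
    by_cases hyc : y = c
    · rw [hyc, hBC3, Equiv.swap_apply_right, G.adj_comm c b]
    · have hyb : y ≠ b := fun h => hxy (hxb.trans h.symm)
      rw [Equiv.swap_apply_of_ne_of_ne hyb hyc]
      exact adjH3b G a b c y hab hac hbc hya hyb hyc
  by_cases hxc : x = c
  · rw [hxc, Equiv.swap_apply_right]
    by_cases hyb : y = b
    · rw [hyb, SimpleGraph.adj_comm, hBC3, Equiv.swap_apply_left, G.adj_comm b c]
    · have hyc : y ≠ c := fun h => hxy (hxc.trans h.symm)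
      rw [Equiv.swap_apply_of_ne_of_ne hyb hyc]
      exact adjH3c G a b c y hab hac hbc hya hyb hyc
  rw [Equiv.swap_apply_of_ne_of_ne hxb hxc]
  by_cases hyb : y = b
  · rw [hyb, Equiv.swap_apply_left, SimpleGraph.adj_comm, G.adj_comm x c]
    exact adjH3b G a b c x hab hac hbc hxa hxb hxc
  by_cases hyc : y = c
  · rw [hyc, Equiv.swap_apply_right, SimpleGraph.adj_comm, G.adj_comm x b]
    exact adjH3c G a b c x hab hac hbc hxa hxb hxc
  rw [Equiv.swap_apply_of_ne_of_ne hyb hyc]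
  exact adjH3xy G a b c x y hab hac hbc hxa hxb hxc hya hyb hyc hxy
end

section
/- For any finite simple graph G of order n, evaluating the interlace polynomial at 2 gives q(G; 2) = 2^n. -/
/-- Deletion of the vertex `a` from `G`. -/
def delVert {V : Type} (G : SimpleGraph V) (a : V) : SimpleGraph {v : V // v ≠ a} :=
  G.comap (fun v => v.1)

/-- `q` is an interlace polynomial map: invariant under graph isomorphism,
satisfying the pivot-deletion recursion `q(G) = q(G-a) + q(G^{ab}-b)` for every
edge `ab`, and equal to `x^n` on the edgeless graph on `n` vertices. -/
def IsInterlacePoly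
    (q : ∀ (V : Type) [Fintype V] [DecidableEq V], SimpleGraph V → Polynomial ℤ) : Prop :=
  (∀ (V W : Type) [Fintype V] [DecidableEq V] [Fintype W] [DecidableEq W]
      (G : SimpleGraph V) (H : SimpleGraph W), Nonempty (G ≃g H) → q V G = q W H) ∧
  (∀ (V : Type) [Fintype V] [DecidableEq V] (G : SimpleGraph V) (a b : V), G.Adj a b →
      q V G = q {v : V // v ≠ a} (delVert G a) +
        q {v : V // v ≠ b} (delVert (pivot G a b) b)) ∧
  (∀ (V : Type) [Fintype V] [DecidableEq V],
      q V (⊥ : SimpleGraph V) = Polynomial.X ^ (Fintype.card V))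


lemma card_ne_aux {V : Type} [Fintype V] [DecidableEq V] (a : V) :
    Fintype.card {v : V // v ≠ a} = Fintype.card V - 1 := by
  have := Fintype.card_subtype_compl (fun v : V => v = a)
  simpa [Fintype.card_subtype_eq] using this

lemma interlace_key
    (q : ∀ (V : Type) [Fintype V] [DecidableEq V], SimpleGraph V → Polynomial ℤ)
    (hq : IsInterlacePoly q) :
    ∀ n (V : Type) [Fintype V] [DecidableEq V] (G : SimpleGraph V),
      Fintype.card V = n → (q V G).eval 2 = 2 ^ n := by
  intro n
  induction n using Nat.strong_induction_on with
  | _ n ih =>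
    intro V _ _ G hn
    by_cases h : ∃ a b, G.Adj a b
    · obtain ⟨a, b, hab⟩ := h
      have hn1 : 1 ≤ n := by
        have : 0 < Fintype.card V := Fintype.card_pos_iff.mpr ⟨a⟩
        omega
      rw [hq.2.1 V G a b hab, Polynomial.eval_add]
      rw [ih (n-1) (by omega) _ _ (by rw [card_ne_aux, hn]),
          ih (n-1) (by omega) _ _ (by rw [card_ne_aux, hn])]
      rw [← two_mul, ← pow_succ']
      congr 1
      omega
    · push_neg at h
      have : G = ⊥ := by
        ext x y; simp [h]
      subst this
      rw [hq.2.2, Polynomial.eval_pow, Polynomial.eval_X, hn]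

theorem interlacePoly_eval_two
    (q : ∀ (V : Type) [Fintype V] [DecidableEq V], SimpleGraph V → Polynomial ℤ)
    (hq : IsInterlacePoly q)
    {V : Type} [Fintype V] [DecidableEq V] (G : SimpleGraph V) :
    (q V G).eval 2 = 2 ^ (Fintype.card V) := interlace_key q hq (Fintype.card V) V G rfl
end

section
/- Duplicating a vertex a of a graph G (adding a new vertex a' with the same neighborhood as a and not adjacent to a) yields q(G ∘ a) = (1 + x)·q(G) − x·q(G − a). -/
/-- `G ∘ a`: duplicate the vertex `a`, adding a new vertex (`none`) adjacent to
exactly the neighbors of `a`, and not adjacent to `a` itself. -/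
def dupVert {V : Type} (G : SimpleGraph V) (a : V) : SimpleGraph (Option V) :=
  SimpleGraph.fromRel (fun x y =>
    match x, y with
    | some u, some v => G.Adj u v
    | none, some v => G.Adj a v
    | _, _ => False)


def lift {W : Type} (H : SimpleGraph W) : SimpleGraph (Option W) where
  Adj x y := ∃ u v, H.Adj u v ∧ x = some u ∧ y = some v
  symm := by constructor; rintro x y ⟨u, v, h, rfl, rfl⟩; exact ⟨v, u, h.symm, rfl, rfl⟩
  loopless := by constructor; rintro x ⟨u, v, h, rfl, hv⟩; exact h.ne (Option.some_injective _ hv.symm).symm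

@[simp] lemma lift_adj_some_some {W : Type} {H : SimpleGraph W} {u v : W} :
    (lift H).Adj (some u) (some v) ↔ H.Adj u v := by
  constructor
  · rintro ⟨u', v', h, hu, hv⟩
    cases Option.some_injective _ hu; cases Option.some_injective _ hv; exact h
  · intro h; exact ⟨u, v, h, rfl, rfl⟩

@[simp] lemma lift_adj_none_left {W : Type} {H : SimpleGraph W} {y : Option W} :
    ¬ (lift H).Adj none y := by rintro ⟨u, v, h, hu, hv⟩; cases hu

@[simp] lemma lift_adj_none_right {W : Type} {H : SimpleGraph W} {x : Option W} :
    ¬ (lift H).Adj x none := by rintro ⟨u, v, h, hu, hv⟩; cases hv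

@[simp] lemma dup_adj_some_some {V : Type} {G : SimpleGraph V} {a u v : V} :
    (dupVert G a).Adj (some u) (some v) ↔ G.Adj u v := by
  simp only [dupVert, SimpleGraph.fromRel_adj]
  constructor
  · rintro ⟨h, h1 | h1⟩; exact h1; exact h1.symm
  · intro h; exact ⟨by simpa using h.ne, Or.inl h⟩

@[simp] lemma dup_adj_none_some {V : Type} {G : SimpleGraph V} {a v : V} :
    (dupVert G a).Adj none (some v) ↔ G.Adj a v := by
  simp [dupVert, SimpleGraph.fromRel_adj]

@[simp] lemma dup_adj_some_none {V : Type} {G : SimpleGraph V} {a u : V} :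
    (dupVert G a).Adj (some u) none ↔ G.Adj a u := by
  simp [dupVert, SimpleGraph.fromRel_adj]

@[simp] lemma dup_adj_none_none {V : Type} {G : SimpleGraph V} {a : V} :
    ¬ (dupVert G a).Adj none none := by simp [dupVert]

-- togglePair for lift
lemma tp_lift_some_some {W : Type} {H : SimpleGraph W} {a b u v : W} :
    togglePair (lift H) (some a) (some b) (some u) (some v) ↔ togglePair H a b u v := by
  unfold togglePair
  simp only [lift_adj_some_some, ne_eq, Option.some.injEq]

lemma tp_lift_none_left {W : Type} {H : SimpleGraph W} {a b : W} {y : Option W} :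
    ¬ togglePair (lift H) (some a) (some b) none y := by
  rintro ⟨-, h | h, -⟩ <;> exact lift_adj_none_right h

lemma tp_lift_none_right {W : Type} {H : SimpleGraph W} {a b : W} {x : Option W} :
    ¬ togglePair (lift H) (some a) (some b) x none := by
  rintro ⟨-, -, h | h, -⟩ <;> exact lift_adj_none_right h

lemma pivot_lift {W : Type} (H : SimpleGraph W) (a b : W) :
    pivot (lift H) (some a) (some b) = lift (pivot H a b) := by
  ext x y
  match x, y with
  | none, _ => simp [pivot, tp_lift_none_left]
  | some u, none => simp [pivot, tp_lift_none_right]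
  | some u, some v =>
    simp only [pivot, tp_lift_some_some, lift_adj_some_some, ne_eq, Option.some.injEq]

-- togglePair for dup
lemma tp_dup_some_some {V : Type} {G : SimpleGraph V} {a b u v : V} :
    togglePair (dupVert G a) (some a) (some b) (some u) (some v) ↔ togglePair G a b u v := by
  unfold togglePair
  simp only [dup_adj_some_some, ne_eq, Option.some.injEq]

lemma pivot_dup_some_some {V : Type} {G : SimpleGraph V} {a b u v : V} :
    (pivot (dupVert G a) (some a) (some b)).Adj (some u) (some v) ↔ (pivot G a b).Adj u v := by
  simp only [pivot, tp_dup_some_some, dup_adj_some_some, ne_eq, Option.some.injEq]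

lemma pivot_dup_none_some {V : Type} {G : SimpleGraph V} {a b v : V}
    (hab : G.Adj a b) (hvb : v ≠ b) :
    ¬ (pivot (dupVert G a) (some a) (some b)).Adj none (some v) := by
  by_cases hva : v = a
  · subst hva
    simp only [pivot, togglePair, ne_eq, Option.some.injEq, dup_adj_none_some,
      dup_adj_some_none, SimpleGraph.irrefl]
    tauto
  · simp only [pivot, togglePair, ne_eq, Option.some.injEq, dup_adj_none_some,
      dup_adj_some_some, dup_adj_some_none, SimpleGraph.irrefl, hva, hvb]
    by_cases hav : G.Adj a v <;> by_cases hbv : G.Adj b v <;> tauto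


/-- The equiv `{x : Option W // x ≠ some a} ≃ Option {w : W // w ≠ a}`. -/
def subOption {W : Type} (a : W) : {x : Option W // x ≠ some a} ≃ Option {w : W // w ≠ a} where
  toFun x := match x with
    | ⟨none, _⟩ => none
    | ⟨some w, h⟩ => some ⟨w, fun hw => h (by rw [hw])⟩
  invFun y := match y with
    | none => ⟨none, by simp⟩
    | some ⟨w, h⟩ => ⟨some w, by simpa using h⟩
  left_inv := by rintro ⟨(_ | w), h⟩ <;> rfl
  right_inv := by rintro (_ | ⟨w, h⟩) <;> rfl

/-- Deleting `some a` from `lift H` is isomorphic to `lift (H - a)`. -/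
def liftDelIso {W : Type} (H : SimpleGraph W) (a : W) :
    delVert (lift H) (some a) ≃g lift (delVert H a) where
  toEquiv := subOption a
  map_rel_iff' := by
    rintro ⟨(_ | u), hu⟩ ⟨(_ | v), hv⟩ <;>
      simp [subOption, delVert, SimpleGraph.comap_adj]

/-- Deleting `some a` from `dupVert G a` recovers `G`. -/
def dupDelIso {V : Type} [DecidableEq V] (G : SimpleGraph V) (a : V) :
    delVert (dupVert G a) (some a) ≃g G where
  toEquiv :=
  { toFun := fun x => match x with
      | ⟨none, _⟩ => a
      | ⟨some v, _⟩ => v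
    invFun := fun v => if h : v = a then ⟨none, by simp⟩ else ⟨some v, by simp [h]⟩
    left_inv := by
      rintro ⟨(_ | v), h⟩
      · simp
      · have hv : v ≠ a := fun hv => h (by rw [hv])
        simp [hv]
    right_inv := by
      intro v
      by_cases h : v = a <;> simp [h]
    }
  map_rel_iff' := by
    rintro ⟨(_ | u), hu⟩ ⟨(_ | v), hv⟩ <;>
      simp_all [delVert, SimpleGraph.comap_adj, SimpleGraph.adj_comm]

/-- Deleting `some b` from the pivot of `dupVert G a` at `some a, some b` gives
`lift ((G^{ab}) - b)`. -/
def pivotDupDelIso {V : Type} (G : SimpleGraph V) (a b : V) (hab : G.Adj a b) :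
    delVert (pivot (dupVert G a) (some a) (some b)) (some b) ≃g
      lift (delVert (pivot G a b) b) where
  toEquiv := subOption b
  map_rel_iff' := by
    rintro ⟨(_ | u), hu⟩ ⟨(_ | v), hv⟩
    · simp [subOption, delVert, SimpleGraph.comap_adj]
    · have hv' : v ≠ b := fun h => hv (by rw [h])
      simp [subOption, delVert, SimpleGraph.comap_adj, pivot_dup_none_some hab hv']
    · have hu' : u ≠ b := fun h => hu (by rw [h])
      simp [subOption, delVert, SimpleGraph.comap_adj,
        ((pivot (dupVert G a) (some a) (some b)).adj_comm _ _).trans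
          (iff_false_intro (pivot_dup_none_some hab hu'))]
    · simp [subOption, delVert, SimpleGraph.comap_adj, pivot_dup_some_some]

lemma lift_bot {W : Type} : lift (⊥ : SimpleGraph W) = ⊥ := by
  ext x y
  cases x <;> cases y <;> simp

lemma card_ne {W : Type} [Fintype W] [DecidableEq W] (a : W) :
    Fintype.card {v : W // v ≠ a} = Fintype.card W - 1 := by
  have := Fintype.card_subtype_compl (fun v : W => v = a)
  simp only [Fintype.card_subtype_eq] at this
  exact this

lemma q_lift (q : ∀ (V : Type) [Fintype V] [DecidableEq V], SimpleGraph V → Polynomial ℤ)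
    (hq : IsInterlacePoly q) :
    ∀ (n : ℕ) (W : Type) [Fintype W] [DecidableEq W] (H : SimpleGraph W),
      Fintype.card W = n → q (Option W) (lift H) = Polynomial.X * q W H := by
  intro n
  induction n using Nat.strong_induction_on with
  | _ n IH =>
    intro W _ _ H hcard
    by_cases hE : H = ⊥
    · subst hE
      rw [lift_bot, hq.2.2, hq.2.2, hcard, Fintype.card_option, hcard, pow_succ,
        mul_comm]
    · obtain ⟨a, b, hab⟩ : ∃ a b, H.Adj a b := by
        by_contra h
        push_neg at h
        exact hE (by ext u v; simp [h u v])
      have hpos : 0 < n := hcard ▸ Fintype.card_pos_iff.mpr ⟨a⟩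
      have hlt : n - 1 < n := Nat.sub_lt hpos one_pos
      have habL : (lift H).Adj (some a) (some b) := lift_adj_some_some.mpr hab
      have h1 := hq.2.1 (Option W) (lift H) (some a) (some b) habL
      have h2 := hq.2.1 W H a b hab
      have e1 : q {v : Option W // v ≠ some a} (delVert (lift H) (some a)) =
          Polynomial.X * q {v : W // v ≠ a} (delVert H a) := by
        rw [hq.1 _ _ _ _ ⟨liftDelIso H a⟩]
        exact IH _ hlt _ _ (by rw [card_ne, hcard])
      have e2 : q {v : Option W // v ≠ some b}
            (delVert (pivot (lift H) (some a) (some b)) (some b)) =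
          Polynomial.X * q {v : W // v ≠ b} (delVert (pivot H a b) b) := by
        rw [pivot_lift, hq.1 _ _ _ _ ⟨liftDelIso (pivot H a b) b⟩]
        exact IH _ hlt _ _ (by rw [card_ne, hcard])
      rw [h1, e1, e2, h2]
      ring

theorem interlacePoly_dup
    (q : ∀ (V : Type) [Fintype V] [DecidableEq V], SimpleGraph V → Polynomial ℤ)
    (hq : IsInterlacePoly q)
    {V : Type} [Fintype V] [DecidableEq V] (G : SimpleGraph V) (a : V) :
    q (Option V) (dupVert G a) =
      (1 + Polynomial.X) * q V G -
        Polynomial.X * q {v : V // v ≠ a} (delVert G a) := by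
  by_cases hiso : ∃ b, G.Adj a b
  · obtain ⟨b, hab⟩ := hiso
    have habD : (dupVert G a).Adj (some a) (some b) := dup_adj_some_some.mpr hab
    have h1 := hq.2.1 (Option V) (dupVert G a) (some a) (some b) habD
    have h2 := hq.2.1 V G a b hab
    have e1 : q {v : Option V // v ≠ some a} (delVert (dupVert G a) (some a)) = q V G :=
      hq.1 _ _ _ _ ⟨dupDelIso G a⟩
    have e2 : q {v : Option V // v ≠ some b}
          (delVert (pivot (dupVert G a) (some a) (some b)) (some b)) =
        Polynomial.X * q {v : V // v ≠ b} (delVert (pivot G a b) b) := by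
      rw [hq.1 _ _ _ _ ⟨pivotDupDelIso G a b hab⟩]
      exact q_lift q hq _ _ _ rfl
    rw [h1, e1, e2]
    have : q {v : V // v ≠ b} (delVert (pivot G a b) b) =
        q V G - q {v : V // v ≠ a} (delVert G a) := by rw [h2]; ring
    rw [this]
    ring
  · push_neg at hiso
    have hdl : dupVert G a = lift G := by
      ext x y
      cases x <;> cases y <;> simp [hiso]
    have hGiso : G ≃g lift (delVert G a) :=
      { toEquiv :=
        { toFun := fun v => if h : v = a then none else some ⟨v, h⟩
          invFun := fun x => match x with
            | none => a
            | some ⟨v, _⟩ => v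
          left_inv := by intro v; by_cases h : v = a <;> simp [h]
          right_inv := by
            rintro (_ | ⟨v, h⟩)
            · simp
            · simp [h] }
        map_rel_iff' := by
          intro u v
          by_cases hu : u = a <;> by_cases hv : v = a <;>
            simp_all [delVert, SimpleGraph.comap_adj, SimpleGraph.adj_comm] }
    have e3 : q (Option V) (dupVert G a) = Polynomial.X * q V G := by
      rw [hdl]; exact q_lift q hq _ _ _ rfl
    have e4 : q V G = Polynomial.X * q {v : V // v ≠ a} (delVert G a) := by
      rw [hq.1 _ _ _ _ ⟨hGiso⟩]
      exact q_lift q hq _ _ _ rfl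
    rw [e3, e4]
    ring
end
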